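/- arXiv:2303.08882 — 2 statements merged into one kernel-verified Lean document; each statement's English description precedes it below -/
import Mathlib

section
/- Let F be a field of characteristic different from 7, let g ∈ F have multiplicative order 6, and let E = {g^i : 1 ≤ i ≤ 6}. Then for every e ∈ E there are exactly two ordered pairs (e₁, e₂) ∈ E × E with e₁ + e₂ = e, namely (e·g, e·g⁵) and (e·g⁵, e·g). -/
set_option maxHeartbeats 2000000 in
theorem stmt_3 {F : Type*} [Field F] (hchar : ringChar F ≠ 7)
    (g : F) (hg : orderOf g = 6)
    (E : Set F) (hE : E = {x : F | ∃ i : ℕ, 1 ≤ i ∧ i ≤ 6 ∧ x = g ^ i}) :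
    ∀ e ∈ E,
      {p : F × F | p.1 ∈ E ∧ p.2 ∈ E ∧ p.1 + p.2 = e} =
        ({(e * g, e * g ^ 5), (e * g ^ 5, e * g)} : Set (F × F)) ∧
      (e * g, e * g ^ 5) ≠ (e * g ^ 5, e * g) := by
  have hg6 : g ^ 6 = 1 := by rw [← hg]; exact pow_orderOf_eq_one g
  have hne2 : g ^ 2 ≠ 1 := by
    intro h
    have := orderOf_dvd_of_pow_eq_one h
    rw [hg] at this; omega
  have hne3 : g ^ 3 ≠ 1 := by
    intro h
    have := orderOf_dvd_of_pow_eq_one h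
    rw [hg] at this; omega
  have hg0 : g ≠ 0 := by
    intro h
    rw [h] at hg6
    norm_num at hg6
  have h3 : g ^ 3 = -1 := by
    have h0 : (g ^ 3 - 1) * (g ^ 3 + 1) = 0 := by linear_combination hg6
    rcases mul_eq_zero.mp h0 with h | h
    · exact absurd (by linear_combination h) hne3
    · linear_combination h
  have h2 : g ^ 2 = g - 1 := by
    have h0 : (g ^ 2 - 1) * (g ^ 4 + g ^ 2 + 1) = 0 := by linear_combination hg6
    rcases mul_eq_zero.mp h0 with h | h
    · exact absurd (by linear_combination h) hne2
    · linear_combination h - g * h3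
  have hq : g * g = g - 1 := by linear_combination h2
  have h4 : g ^ 4 = -g := by linear_combination g * h3
  have h5 : g ^ 5 = 1 - g := by linear_combination g ^ 2 * h3 - h2
  have h1ne : (1 : F) ≠ 0 := one_ne_zero
  have h2ne : (2 : F) ≠ 0 := fun h => hne3 (by rw [h3]; linear_combination -h)
  have h4ne : (2 : F) * 2 ≠ 0 := mul_ne_zero h2ne h2ne
  have h3ne : (3 : F) ≠ 0 := by
    intro h
    have hsq : (g + 1) * (g + 1) = 0 := by linear_combination hq + g * h
    have hgm : g = -1 := by linear_combination mul_self_eq_zero.mp hsq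
    exact hne2 (by rw [hgm]; ring)
  have h9ne : (3 : F) * 3 ≠ 0 := mul_ne_zero h3ne h3ne
  have h7ne : (7 : F) ≠ 0 := by
    intro h
    have hd : ringChar F ∣ 7 := ringChar.dvd (by exact_mod_cast h)
    rcases (Nat.Prime.eq_one_or_self_of_dvd (by norm_num) _ hd) with h1 | h1
    · exact CharP.ringChar_ne_one h1
    · exact hchar h1
  have lin : ∀ a b : F, a * g = b → a * a - a * b + b * b = 0 := by
    intro a b h
    linear_combination a * a * hq + (a - a * g - b) * h
  have memE : ∀ k : ℕ, g ^ k ∈ E := by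
    intro k
    have hk : g ^ k = g ^ (k % 6) := by
      conv_lhs => rw [← Nat.div_add_mod k 6]
      rw [pow_add, pow_mul, hg6, one_pow, one_mul]
    rw [hE]
    by_cases h0 : k % 6 = 0
    · exact ⟨6, by norm_num, by norm_num, by rw [hk, h0, pow_zero]; exact hg6.symm⟩
    · exact ⟨k % 6, by omega, by have := Nat.mod_lt k (by norm_num : 0 < 6); omega, hk⟩
  have L : ∀ x ∈ E, ∀ y ∈ E, x + y = 1 → (x = g ∧ y = g ^ 5) ∨ (x = g ^ 5 ∧ y = g) := by
    rw [hE]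
    rintro x ⟨i, hi1, hi6, rfl⟩ y ⟨j, hj1, hj6, rfl⟩ hxy
    interval_cases i <;> interval_cases j <;>
      simp only [h2, h3, h4, h5, hg6, pow_one] at hxy ⊢ <;>
      first
        | exact Or.inl ⟨trivial, trivial⟩
        | exact Or.inr ⟨trivial, trivial⟩
        | exact absurd (by linear_combination lin 1 0 (by first | linear_combination hxy | linear_combination -hxy | linear_combination 2 * hxy | linear_combination -2 * hxy)) h1ne
        | exact absurd (by linear_combination lin 0 1 (by first | linear_combination hxy | linear_combination -hxy | linear_combination 2 * hxy | linear_combination -2 * hxy)) h1ne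
        | exact absurd (by linear_combination lin 1 (-1) (by first | linear_combination hxy | linear_combination -hxy | linear_combination 2 * hxy | linear_combination -2 * hxy)) h3ne
        | exact absurd (by linear_combination lin 1 2 (by first | linear_combination hxy | linear_combination -hxy | linear_combination 2 * hxy | linear_combination -2 * hxy)) h3ne
        | exact absurd (by linear_combination lin 2 1 (by first | linear_combination hxy | linear_combination -hxy | linear_combination 2 * hxy | linear_combination -2 * hxy)) h3ne
        | exact absurd (by linear_combination lin 0 3 (by first | linear_combination hxy | linear_combination -hxy | linear_combination 2 * hxy | linear_combination -2 * hxy)) h9ne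
        | exact absurd (by linear_combination lin 1 3 (by first | linear_combination hxy | linear_combination -hxy | linear_combination 2 * hxy | linear_combination -2 * hxy)) h7ne
        | exact absurd (by linear_combination lin 1 (-2) (by first | linear_combination hxy | linear_combination -hxy | linear_combination 2 * hxy | linear_combination -2 * hxy)) h7ne
        | exact absurd (by linear_combination lin 2 3 (by first | linear_combination hxy | linear_combination -hxy | linear_combination 2 * hxy | linear_combination -2 * hxy)) h7ne
        | exact absurd (by linear_combination lin 2 (-1) (by first | linear_combination hxy | linear_combination -hxy | linear_combination 2 * hxy | linear_combination -2 * hxy)) h7ne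
        | exact absurd (by linear_combination lin 2 0 (by first | linear_combination hxy | linear_combination -hxy | linear_combination 2 * hxy | linear_combination -2 * hxy)) h4ne
        | exact absurd (by linear_combination lin 2 2 (by first | linear_combination hxy | linear_combination -hxy | linear_combination 2 * hxy | linear_combination -2 * hxy)) h4ne
        | exact absurd (by first | linear_combination hxy | linear_combination -hxy) h2ne
  intro e he
  rw [hE] at he
  obtain ⟨i, hi1, hi6, rfl⟩ := he
  have he0 : g ^ i ≠ 0 := pow_ne_zero _ hg0
  have hu : g ^ i * g ^ (6 - i) = 1 := by
    rw [← pow_add, show i + (6 - i) = 6 by omega, hg6]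
  constructor
  · ext ⟨p1, p2⟩
    simp only [Set.mem_setOf_eq, Set.mem_insert_iff, Set.mem_singleton_iff, Prod.mk.injEq]
    constructor
    · rintro ⟨hp1, hp2, hsum⟩
      rw [hE] at hp1 hp2
      obtain ⟨a, ha1, ha6, rfl⟩ := hp1
      obtain ⟨b, hb1, hb6, rfl⟩ := hp2
      have hx : g ^ a * g ^ (6 - i) ∈ E := by rw [← pow_add]; exact memE _
      have hy : g ^ b * g ^ (6 - i) ∈ E := by rw [← pow_add]; exact memE _
      have hxy1 : g ^ a * g ^ (6 - i) + g ^ b * g ^ (6 - i) = 1 := by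
        rw [← add_mul, hsum]; exact hu
      rcases L _ hx _ hy hxy1 with ⟨hx1, hy1⟩ | ⟨hx1, hy1⟩
      · exact Or.inl ⟨by linear_combination g ^ i * hx1 - g ^ a * hu,
                      by linear_combination g ^ i * hy1 - g ^ b * hu⟩
      · exact Or.inr ⟨by linear_combination g ^ i * hx1 - g ^ a * hu,
                      by linear_combination g ^ i * hy1 - g ^ b * hu⟩
    · have m1 : g ^ i * g ∈ E := by have := memE (i + 1); rwa [pow_succ] at this
      have m5 : g ^ i * g ^ 5 ∈ E := by have := memE (i + 5); rwa [pow_add] at this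
      have hs : g ^ i * g + g ^ i * g ^ 5 = g ^ i := by linear_combination g ^ i * h5
      rintro (⟨ha, hb⟩ | ⟨ha, hb⟩)
      · exact ⟨by rw [ha]; exact m1, by rw [hb]; exact m5, by rw [ha, hb]; exact hs⟩
      · exact ⟨by rw [ha]; exact m5, by rw [hb]; exact m1, by rw [ha, hb]; linear_combination hs⟩
  · intro hcontra
    have hfst : g ^ i * g = g ^ i * g ^ 5 := congrArg Prod.fst hcontra
    have hgg : g = g ^ 5 := mul_left_cancel₀ he0 hfst
    rw [h5] at hgg
    exact h3ne (by linear_combination lin 2 1 (by linear_combination hgg))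
end

section
/- Let F be a field, let g ∈ F have multiplicative order 4, and set E = {1, −1, g, −g} and E₊ = {g + 1, g − 1, −(g + 1), 1 − g}. Then for every e ∈ E there exist at least two distinct ordered pairs (α, β) ∈ E × E₊ with α + β = e. -/
theorem stmt_5 {F : Type*} [Field F] (g : F) (hg : orderOf g = 4)
    (E Eplus : Set F)
    (hE : E = {1, -1, g, -g}) (hEplus : Eplus = {g + 1, g - 1, -(g + 1), 1 - g}) :
    ∀ e ∈ E, ∃ p q : F × F, p ≠ q ∧
      p.1 ∈ E ∧ p.2 ∈ Eplus ∧ p.1 + p.2 = e ∧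
      q.1 ∈ E ∧ q.2 ∈ Eplus ∧ q.1 + q.2 = e := by
  have h4 : g ^ 4 = 1 := by rw [← hg]; exact pow_orderOf_eq_one g
  have h2 : g ^ 2 ≠ 1 := by
    intro h
    have hd := orderOf_dvd_of_pow_eq_one h
    rw [hg] at hd
    omega
  have hsq : g ^ 2 = -1 := by
    have hz : (g ^ 2 - 1) * (g ^ 2 + 1) = 0 := by linear_combination h4
    rcases mul_eq_zero.mp hz with h | h
    · exact absurd (by linear_combination h) h2
    · linear_combination h
  have hne1 : (1 : F) ≠ -1 := by
    intro h
    exact h2 (by rw [hsq, ← h])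
  have hg0 : g ≠ 0 := by
    intro h
    rw [h] at h4
    simp at h4
  have hgng : g ≠ -g := by
    intro h
    apply hne1
    have h1 : g * 1 = g * (-1) := by linear_combination h
    exact mul_left_cancel₀ hg0 h1
  subst hE hEplus
  intro e he
  simp only [Set.mem_insert_iff, Set.mem_singleton_iff] at he
  rcases he with h | h | h | h
  · exact ⟨(g, 1 - g), (-g, g + 1),
      fun hpq => hgng (congrArg Prod.fst hpq),
      by simp, by simp, by rw [h]; ring, by simp, by simp, by rw [h]; ring⟩
  · exact ⟨(g, -(g + 1)), (-g, g - 1),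
      fun hpq => hgng (congrArg Prod.fst hpq),
      by simp, by simp, by rw [h]; ring, by simp, by simp, by rw [h]; ring⟩
  · exact ⟨(1, g - 1), (-1, g + 1),
      fun hpq => hne1 (congrArg Prod.fst hpq),
      by simp, by simp, by rw [h]; ring, by simp, by simp, by rw [h]; ring⟩
  · exact ⟨(1, -(g + 1)), (-1, 1 - g),
      fun hpq => hne1 (congrArg Prod.fst hpq),
      by simp, by simp, by rw [h]; ring, by simp, by simp, by rw [h]; ring⟩
end
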